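/- Let X = S^m ⊂ ℝ^{m+1} be the unit sphere and let A, B ∈ S^m be two distinct, non-antipodal points. Then for every integer n ≥ 1 there exist exactly n+1 billiard trajectories inside S^m which start at A, end at B and make exactly n reflections: every such trajectory lies in the unique 2-plane through A, B and the origin, and on the corresponding great circle the consecutive reflection points subtend the constant angle α_k = (φ + 2πk)/(n+1) for some k ∈ {0,1,...,n}, where φ ∈ (0,2π) is the oriented angle from A to B. -/

import Mathlib

/-!
# Statement 2

For the unit sphere `S^m ⊂ ℝ^{m+1}` and two distinct non-antipodal points
`A, B ∈ S^m`, for every `n ≥ 1` there exist exactly `n+1` billiard trajectories from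
`A` to `B` with `n` reflections: each lies in the `2`-plane spanned by `A, B` and the
origin, and on the corresponding great circle the consecutive reflection points subtend
the constant angle `α_k = (φ + 2πk)/(n+1)` for some `k ∈ {0,…,n}`, where
`φ ∈ (0, 2π)` is the oriented angle from `A` to `B`.
-/

open scoped Real

noncomputable section

/-- The ambient Euclidean space `ℝ^{m+1}`. -/
abbrev Euc (m : ℕ) := EuclideanSpace ℝ (Fin (m + 1))

/-- The unit vector pointing from `y` towards `x`. -/
def udir {m : ℕ} (x y : Euc m) : Euc m := ‖x - y‖⁻¹ • (x - y)

/-- `p : Fin (n+2) → ℝ^{m+1}` is a billiard trajectory inside the unit sphere `S^m`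
from `A` to `B` with `n` reflections: all points lie on the sphere, consecutive points
are distinct, and at every reflection point the sum of the two outgoing unit vectors is
orthogonal to the tangent space of the sphere (which is the orthogonal complement of
the radius vector), i.e. the radius vector bisects the angle of incidence/reflection. -/
def IsSphereBilliardTrajectory {m : ℕ} (A B : Euc m) (n : ℕ)
    (p : Fin (n + 2) → Euc m) : Prop :=
  p 0 = A ∧ p (Fin.last (n + 1)) = B ∧
  (∀ i, ‖p i‖ = 1) ∧
  (∀ i : Fin (n + 1), p i.castSucc ≠ p i.succ) ∧
  (∀ i : Fin n, ∀ v : Euc m, (inner ℝ (p i.succ.castSucc) v : ℝ) = 0 →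
    (inner ℝ (udir (p i.succ.castSucc) (p i.castSucc.castSucc) +
        udir (p i.succ.castSucc) (p i.succ.succ)) v : ℝ) = 0)

namespace SBT
variable {m : ℕ} {A A' : Euc m}

def emap (A A' : Euc m) (θ : ℝ) : Euc m := Real.cos θ • A + Real.sin θ • A'

lemma inner_emap (hA : ‖A‖ = 1) (hA' : ‖A'‖ = 1) (hAA' : (inner ℝ A A' : ℝ) = 0) (θ ψ : ℝ) :
    (inner ℝ (emap A A' θ) (emap A A' ψ) : ℝ) = Real.cos (θ - ψ) := by
  have h1 : (inner ℝ A A : ℝ) = 1 := by rw [real_inner_self_eq_norm_sq, hA]; norm_num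
  have h2 : (inner ℝ A' A' : ℝ) = 1 := by rw [real_inner_self_eq_norm_sq, hA']; norm_num
  have h3 : (inner ℝ A' A : ℝ) = 0 := by rw [real_inner_comm]; exact hAA'
  simp only [emap, inner_add_left, inner_add_right, real_inner_smul_left,
    real_inner_smul_right, h1, h2, h3, hAA', Real.cos_sub]
  ring

lemma norm_emap (hA : ‖A‖ = 1) (hA' : ‖A'‖ = 1) (hAA' : (inner ℝ A A' : ℝ) = 0) (θ : ℝ) :
    ‖emap A A' θ‖ = 1 := by
  have := inner_emap hA hA' hAA' θ θ
  rw [real_inner_self_eq_norm_sq, sub_self, Real.cos_zero] at this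
  nlinarith [norm_nonneg (emap A A' θ)]

lemma norm_emap_sub_sq (hA : ‖A‖ = 1) (hA' : ‖A'‖ = 1) (hAA' : (inner ℝ A A' : ℝ) = 0) (θ ψ : ℝ) :
    ‖emap A A' θ - emap A A' ψ‖ ^ 2 = 2 - 2 * Real.cos (θ - ψ) := by
  rw [← real_inner_self_eq_norm_sq, inner_sub_sub_self]
  rw [real_inner_self_eq_norm_sq, real_inner_self_eq_norm_sq, norm_emap hA hA' hAA',
    norm_emap hA hA' hAA', inner_emap hA hA' hAA', real_inner_comm,
    inner_emap hA hA' hAA']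
  ring

lemma cos_eq_one_of_emap_eq (hA : ‖A‖ = 1) (hA' : ‖A'‖ = 1) (hAA' : (inner ℝ A A' : ℝ) = 0)
    {θ ψ : ℝ} (h : emap A A' θ = emap A A' ψ) : Real.cos (θ - ψ) = 1 := by
  have := norm_emap_sub_sq hA hA' hAA' θ ψ
  rw [h, sub_self, norm_zero] at this
  nlinarith

lemma emap_eq_of_cos (hA : ‖A‖ = 1) (hA' : ‖A'‖ = 1) (hAA' : (inner ℝ A A' : ℝ) = 0)
    {θ ψ : ℝ} (h : Real.cos (θ - ψ) = 1) : emap A A' θ = emap A A' ψ := by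
  have h2 := norm_emap_sub_sq hA hA' hAA' θ ψ
  rw [h] at h2
  have : ‖emap A A' θ - emap A A' ψ‖ = 0 := by nlinarith [norm_nonneg (emap A A' θ - emap A A' ψ)]
  exact sub_eq_zero.mp (norm_eq_zero.mp this)

end SBT

namespace SBT
variable {m : ℕ} {A A' : Euc m}

lemma emap_add_sub (t α : ℝ) :
    emap A A' (t - α) + emap A A' (t + α) = (2 * Real.cos α) • emap A A' t := by
  simp only [emap, Real.cos_sub, Real.cos_add, Real.sin_sub, Real.sin_add, smul_add,
    smul_smul]
  match_scalars <;> ring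

/-- Forward direction: the equal-angle points satisfy the reflection condition. -/
lemma emap_reflect (hA : ‖A‖ = 1) (hA' : ‖A'‖ = 1) (hAA' : (inner ℝ A A' : ℝ) = 0)
    {α : ℝ} (hα : Real.cos α ≠ 1) (t : ℝ) (v : Euc m)
    (hv : (inner ℝ (emap A A' t) v : ℝ) = 0) :
    (inner ℝ (udir (emap A A' t) (emap A A' (t - α)) + udir (emap A A' t) (emap A A' (t + α))) v : ℝ) = 0 := by
  have hc1 : ‖emap A A' t - emap A A' (t - α)‖ ^ 2 = 2 - 2 * Real.cos α := by
    rw [norm_emap_sub_sq hA hA' hAA']; ring_nf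
  have hc2 : ‖emap A A' t - emap A A' (t + α)‖ ^ 2 = 2 - 2 * Real.cos α := by
    rw [norm_emap_sub_sq hA hA' hAA']
    have : t - (t + α) = -α := by ring
    rw [this, Real.cos_neg]
  have hcc : ‖emap A A' t - emap A A' (t - α)‖ = ‖emap A A' t - emap A A' (t + α)‖ := by
    nlinarith [norm_nonneg (emap A A' t - emap A A' (t - α)),
      norm_nonneg (emap A A' t - emap A A' (t + α))]
  set c := ‖emap A A' t - emap A A' (t - α)‖ with hc
  have h0 : (0:ℝ) ≤ c := norm_nonneg _
  have hcos : Real.cos α < 1 := lt_of_le_of_ne (Real.cos_le_one α) hα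
  have hcpos : 0 < c := by nlinarith
  have key : udir (emap A A' t) (emap A A' (t - α)) + udir (emap A A' t) (emap A A' (t + α))
      = (c⁻¹ * (2 - 2 * Real.cos α)) • emap A A' t := by
    rw [udir, udir, ← hcc, ← hc, ← smul_add]
    rw [show emap A A' t - emap A A' (t - α) + (emap A A' t - emap A A' (t + α))
      = (2 : ℝ) • emap A A' t - (emap A A' (t - α) + emap A A' (t + α)) by module]
    rw [emap_add_sub]
    match_scalars
    ring
  rw [key, real_inner_smul_left, hv, mul_zero]

end SBT

namespace SBT
variable {m : ℕ} {A A' : Euc m}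

lemma refl_scalar {u w s t P Q : ℝ} (hu1 : u < 1) (hw1 : w < 1)
    (hP2 : P ^ 2 = 2 - 2 * u) (hQ2 : Q ^ 2 = 2 - 2 * w)
    (hPpos : 0 < P) (hQpos : 0 < Q)
    (hs2 : s ^ 2 = 1 - u ^ 2) (ht2 : t ^ 2 = 1 - w ^ 2)
    (hlin : Q * s + P * t = 0) : u = w ∧ t = -s := by
  have hsq : Q ^ 2 * s ^ 2 = P ^ 2 * t ^ 2 := by
    have h1 : Q * s = -(P * t) := by linarith
    calc Q ^ 2 * s ^ 2 = (Q * s) ^ 2 := by ring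
      _ = (-(P * t)) ^ 2 := by rw [h1]
      _ = P ^ 2 * t ^ 2 := by ring
  have e2 : (2 - 2 * w) * (1 - u ^ 2) = (2 - 2 * u) * (1 - w ^ 2) := by
    calc (2 - 2 * w) * (1 - u ^ 2) = Q ^ 2 * s ^ 2 := by rw [hQ2, hs2]
      _ = P ^ 2 * t ^ 2 := hsq
      _ = (2 - 2 * u) * (1 - w ^ 2) := by rw [hP2, ht2]
  have h3 : (u - w) * ((1 - u) * (1 - w)) = 0 := by linear_combination e2 / 2
  have huw : u = w := by
    rcases mul_eq_zero.mp h3 with h | h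
    · linarith
    · nlinarith
  have hPQ : P = Q := by
    have h4 : (P - Q) * (P + Q) = 0 := by linear_combination hP2 - hQ2 - 2 * huw
    rcases mul_eq_zero.mp h4 with h | h
    · linarith
    · linarith
  refine ⟨huw, ?_⟩
  have h5 : Q * (s + t) = 0 := by linear_combination hlin - t * hPQ
  rcases mul_eq_zero.mp h5 with h | h
  · linarith
  · linarith

/-- Backward direction: the reflection condition forces the angular recursion. -/
lemma emap_step (hA : ‖A‖ = 1) (hA' : ‖A'‖ = 1) (hAA' : (inner ℝ A A' : ℝ) = 0)
    {a b c : ℝ} (hab : Real.cos (a - b) ≠ 1) (hcb : Real.cos (c - b) ≠ 1)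
    (hrefl : ∀ v : Euc m, (inner ℝ (emap A A' b) v : ℝ) = 0 →
      (inner ℝ (udir (emap A A' b) (emap A A' a) + udir (emap A A' b) (emap A A' c)) v : ℝ) = 0) :
    emap A A' c = emap A A' (2 * b - a) := by
  set u := Real.cos (a - b) with hu
  set w := Real.cos (c - b) with hw
  have hu1 : u < 1 := lt_of_le_of_ne (Real.cos_le_one _) hab
  have hw1 : w < 1 := lt_of_le_of_ne (Real.cos_le_one _) hcb
  set P := ‖emap A A' b - emap A A' a‖ with hP
  set Q := ‖emap A A' b - emap A A' c‖ with hQ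
  have hP2 : P ^ 2 = 2 - 2 * u := by
    rw [hP, norm_emap_sub_sq hA hA' hAA', hu, show b - a = -(a-b) by ring, Real.cos_neg]
  have hQ2 : Q ^ 2 = 2 - 2 * w := by
    rw [hQ, norm_emap_sub_sq hA hA' hAA', hw, show b - c = -(c-b) by ring, Real.cos_neg]
  have hP0 : (0:ℝ) ≤ P := norm_nonneg _
  have hQ0 : (0:ℝ) ≤ Q := norm_nonneg _
  have hPpos : 0 < P := by nlinarith
  have hQpos : 0 < Q := by nlinarith
  -- take v to be the rotation of emap b by π/2
  have hv0 : (inner ℝ (emap A A' b) (emap A A' (b + π/2)) : ℝ) = 0 := by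
    rw [inner_emap hA hA' hAA', show b - (b + π/2) = -(π/2) by ring, Real.cos_neg,
      Real.cos_pi_div_two]
  have hkey := hrefl _ hv0
  rw [inner_add_left, udir, udir, real_inner_smul_left, real_inner_smul_left,
    inner_sub_left, inner_sub_left, hv0, inner_emap hA hA' hAA', inner_emap hA hA' hAA'] at hkey
  rw [show a - (b + π/2) = (a - b) - π/2 by ring, show c - (b + π/2) = (c - b) - π/2 by ring,
    Real.cos_sub_pi_div_two, Real.cos_sub_pi_div_two] at hkey
  -- hkey : P⁻¹ * (0 - sin (a-b)) + Q⁻¹ * (0 - sin (c-b)) = 0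
  set s := Real.sin (a - b) with hs
  set t := Real.sin (c - b) with ht
  have hlin : Q * s + P * t = 0 := by
    rw [← hP, ← hQ] at hkey
    field_simp at hkey
    nlinarith [hkey]
  have hs2 : s ^ 2 = 1 - u ^ 2 := by
    have := Real.sin_sq_add_cos_sq (a - b); rw [← hs, ← hu] at this; nlinarith
  have ht2 : t ^ 2 = 1 - w ^ 2 := by
    have := Real.sin_sq_add_cos_sq (c - b); rw [← ht, ← hw] at this; nlinarith
  obtain ⟨huw, hst⟩ := refl_scalar hu1 hw1 hP2 hQ2 hPpos hQpos hs2 ht2 hlin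
  -- conclude the two coordinates agree
  have hcos : Real.cos c = Real.cos (2 * b - a) := by
    rw [show c = (c - b) + b by ring, show 2 * b - a = -(a - b) + b by ring,
      Real.cos_add, Real.cos_add, Real.cos_neg, Real.sin_neg, ← hu, ← hw, ← hs, ← ht,
      huw, hst]
  have hsin : Real.sin c = Real.sin (2 * b - a) := by
    rw [show c = (c - b) + b by ring, show 2 * b - a = -(a - b) + b by ring,
      Real.sin_add, Real.sin_add, Real.cos_neg, Real.sin_neg, ← hu, ← hw, ← hs, ← ht,
      huw, hst]
  rw [emap, emap, hcos, hsin]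

end SBT

namespace SBT
variable {m : ℕ} {A A' : Euc m}

lemma parallel_of (y u : Euc m) (hy : ‖y‖ = 1)
    (h : ∀ v : Euc m, (inner ℝ y v : ℝ) = 0 → (inner ℝ u v : ℝ) = 0) :
    u = (inner ℝ y u : ℝ) • y := by
  set c : ℝ := inner ℝ y u with hc
  have hv : (inner ℝ y (u - c • y) : ℝ) = 0 := by
    rw [inner_sub_right, real_inner_smul_right, real_inner_self_eq_norm_sq, hy]
    simp [hc]
  have h2 := h _ hv
  have h3 : (inner ℝ (u - c • y) (u - c • y) : ℝ) = 0 := by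
    rw [inner_sub_left, h2, real_inner_smul_left, hv, mul_zero, sub_zero]
  have := inner_self_eq_zero.mp h3
  exact sub_eq_zero.mp this

lemma step_mem_span (x y z : Euc m) (hy : ‖y‖ = 1) (hxy : x ≠ y) (hzy : z ≠ y)
    (h : ∀ v : Euc m, (inner ℝ y v : ℝ) = 0 → (inner ℝ (udir y x + udir y z) v : ℝ) = 0) :
    z ∈ Submodule.span ℝ ({x, y} : Set (Euc m)) := by
  have hpar := parallel_of y (udir y x + udir y z) hy h
  set lam : ℝ := inner ℝ y (udir y x + udir y z) with hlam
  have hyz : y - z ≠ 0 := sub_ne_zero.mpr (Ne.symm hzy)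
  have hyx : y - x ≠ 0 := sub_ne_zero.mpr (Ne.symm hxy)
  have hnz : ‖y - z‖ ≠ 0 := norm_ne_zero_iff.mpr hyz
  have hnx : ‖y - x‖ ≠ 0 := norm_ne_zero_iff.mpr hyx
  have h1 : udir y z = lam • y - udir y x := by
    rw [← hpar]; abel
  have h2 : y - z = ‖y - z‖ • (lam • y - ‖y - x‖⁻¹ • (y - x)) := by
    calc y - z = ‖y - z‖ • udir y z := by rw [udir, smul_inv_smul₀ hnz]
      _ = ‖y - z‖ • (lam • y - ‖y - x‖⁻¹ • (y - x)) := by rw [h1, udir]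
  have h3 : z = y - ‖y - z‖ • (lam • y - ‖y - x‖⁻¹ • (y - x)) := by
    rw [← h2]; abel
  rw [Submodule.mem_span_pair]
  set d := ‖y - z‖ with hd
  set e := ‖y - x‖⁻¹ with he
  refine ⟨-(d * e), 1 - d * lam + d * e, ?_⟩
  rw [h3]
  module

end SBT

namespace SBT
variable {m : ℕ} {A A' : Euc m}

lemma exists_emap (hA : ‖A‖ = 1) (hA' : ‖A'‖ = 1) (hAA' : (inner ℝ A A' : ℝ) = 0)
    {x : Euc m} (hx : ‖x‖ = 1)
    (hmem : x ∈ Submodule.span ℝ ({A, A'} : Set (Euc m))) : ∃ θ : ℝ, x = emap A A' θ := by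
  rw [Submodule.mem_span_pair] at hmem
  obtain ⟨a, b, hab⟩ := hmem
  have h1 : (inner ℝ A A : ℝ) = 1 := by rw [real_inner_self_eq_norm_sq, hA]; norm_num
  have h2 : (inner ℝ A' A' : ℝ) = 1 := by rw [real_inner_self_eq_norm_sq, hA']; norm_num
  have h3 : (inner ℝ A' A : ℝ) = 0 := by rw [real_inner_comm]; exact hAA'
  have hsq : a ^ 2 + b ^ 2 = 1 := by
    have : (inner ℝ x x : ℝ) = 1 := by rw [real_inner_self_eq_norm_sq, hx]; norm_num
    rw [← hab] at this
    simp only [inner_add_left, inner_add_right, real_inner_smul_left, real_inner_smul_right,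
      h1, h2, h3, hAA'] at this
    nlinarith [this]
  set z : ℂ := ⟨a, b⟩ with hz
  have hz0 : z ≠ 0 := by
    intro h
    rw [Complex.ext_iff] at h
    simp at h
    nlinarith [h.1, h.2]
  have habs : ‖z‖ = 1 := by
    rw [Complex.norm_def, Complex.normSq_apply]
    simp only [hz]
    rw [show a * a + b * b = 1 by nlinarith]
    exact Real.sqrt_one
  refine ⟨Complex.arg z, ?_⟩
  have hc := Complex.cos_arg hz0
  have hs := Complex.sin_arg z
  rw [habs] at hc hs
  simp only [hz] at hc hs
  rw [emap, hc, hs]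
  simp only [div_one]
  exact hab.symm

lemma fin_two_step_induction {n : ℕ} (C : Fin (n + 2) → Prop)
    (h0 : C 0) (h1 : C 1)
    (hstep : ∀ i : ℕ, ∀ h : i + 2 < n + 2,
      C ⟨i, by omega⟩ → C ⟨i + 1, by omega⟩ → C ⟨i + 2, h⟩) :
    ∀ i, C i := by
  have key : ∀ j : ℕ, ∀ h : j < n + 2, C ⟨j, h⟩ := by
    intro j
    induction j using Nat.strong_induction_on with
    | _ j ih =>
      match j with
      | 0 => intro h; exact h0
      | 1 => intro h; exact h1
      | (j + 2) => intro h; exact hstep j h (ih j (by omega) (by omega)) (ih (j+1) (by omega) (by omega))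
  intro i
  have : i = ⟨i.1, i.2⟩ := rfl
  rw [this]
  exact key i.1 i.2

end SBT

namespace SBT
variable {m : ℕ}

lemma part1 {n : ℕ} (A B : Euc m) (hA : ‖A‖ = 1) (hB : ‖B‖ = 1)
    (hAB : A ≠ B) (hAB' : A ≠ -B)
    (p : Fin (n + 2) → Euc m) (hp : IsSphereBilliardTrajectory A B n p) :
    ∀ i, p i ∈ Submodule.span ℝ ({A, B} : Set (Euc m)) := by
  obtain ⟨hp0, hpl, hnorm, hne, hrefl⟩ := hp
  set S := Submodule.span ℝ ({p 0, p 1} : Set (Euc m)) with hS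
  have hmemS : ∀ i, p i ∈ S := by
    apply fin_two_step_induction (C := fun i => p i ∈ S)
    · exact Submodule.subset_span (by simp)
    · exact Submodule.subset_span (by simp)
    · intro i h IH1 IH2
      have hrefl' := hrefl ⟨i, by omega⟩
      have hne1 : p ⟨i, by omega⟩ ≠ p ⟨i+1, by omega⟩ := hne ⟨i, by omega⟩
      have hne2 : p ⟨i+1, by omega⟩ ≠ p ⟨i+2, by omega⟩ := hne ⟨i+1, by omega⟩
      have hz := step_mem_span (p ⟨i, by omega⟩) (p ⟨i+1, by omega⟩) (p ⟨i+2, by omega⟩)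
        (hnorm _) hne1 (Ne.symm hne2) hrefl'
      refine Submodule.span_le.mpr ?_ hz
      rintro v (rfl | rfl) <;> simpa using (by assumption)
  have hBmem : B ∈ Submodule.span ℝ ({A, p 1} : Set (Euc m)) := by
    have := hmemS (Fin.last (n+1))
    rw [hpl, hS, hp0] at this
    exact this
  rw [Submodule.mem_span_pair] at hBmem
  obtain ⟨a, b, hab⟩ := hBmem
  have hb : b ≠ 0 := by
    intro hb0
    rw [hb0, zero_smul, add_zero] at hab
    have : |a| = 1 := by
      have := congrArg norm hab
      rw [norm_smul, hA, hB, mul_one] at this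
      simpa using this
    rcases abs_eq (by norm_num : (0:ℝ) ≤ 1) |>.mp this with h1 | h1
    · rw [h1, one_smul] at hab; exact hAB hab
    · rw [h1] at hab
      apply hAB'
      rw [← hab]; simp
  have hp1mem : p 1 ∈ Submodule.span ℝ ({A, B} : Set (Euc m)) := by
    rw [Submodule.mem_span_pair]
    refine ⟨-(b⁻¹ * a), b⁻¹, ?_⟩
    have hcomb : p 1 = b⁻¹ • (B - a • A) := by
      rw [← hab]
      match_scalars <;> field_simp <;> ring
    rw [hcomb]
    module
  intro i
  have := hmemS i
  rw [hS, hp0] at this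
  refine Submodule.span_le.mpr ?_ this
  rintro v (rfl | rfl)
  · exact Submodule.subset_span (by simp)
  · exact hp1mem

end SBT

namespace SBT
variable {m : ℕ}

lemma emap_int_period {A A' : Euc m} (x : ℝ) (j : ℤ) :
    emap A A' (x + j * (2 * π)) = emap A A' x := by
  rw [emap, emap, Real.cos_add_int_mul_two_pi, Real.sin_add_int_mul_two_pi]

lemma part2_back {n : ℕ} (A B A' : Euc m) (hA : ‖A‖ = 1) (hA' : ‖A'‖ = 1)
    (hAA' : (inner ℝ A A' : ℝ) = 0) {φ : ℝ} (hφ : φ ∈ Set.Ioo 0 (2 * π))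
    (hBφ : B = Real.cos φ • A + Real.sin φ • A') (k : ℕ) (hk : k ≤ n) :
    IsSphereBilliardTrajectory A B n (fun i : Fin (n + 2) =>
      Real.cos ((i : ℕ) * ((φ + 2 * π * k) / (n + 1))) • A +
        Real.sin ((i : ℕ) * ((φ + 2 * π * k) / (n + 1))) • A') := by
  obtain ⟨hφ0, hφ2⟩ := hφ
  have hpi := Real.pi_pos
  set β := (φ + 2 * π * k) / (n + 1) with hβ
  have hn1 : (0:ℝ) < (n:ℝ) + 1 := by positivity
  have hβ0 : 0 < β := by
    apply div_pos _ hn1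
    have : (0:ℝ) ≤ 2 * π * k := by positivity
    linarith
  have hβ2 : β < 2 * π := by
    rw [hβ, div_lt_iff₀ hn1]
    have hkn : (k:ℝ) ≤ n := by exact_mod_cast hk
    nlinarith
  have hcβ : Real.cos β ≠ 1 := by
    intro h
    have := (Real.cos_eq_one_iff_of_lt_of_lt (by linarith) hβ2).mp h
    linarith
  have hE : ∀ i : Fin (n+2), (fun i : Fin (n + 2) =>
      Real.cos ((i : ℕ) * β) • A + Real.sin ((i : ℕ) * β) • A') i = emap A A' ((i:ℕ) * β) :=
    fun i => rfl
  refine ⟨?_, ?_, ?_, ?_, ?_⟩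
  · show emap A A' (((0 : Fin (n+2)) : ℕ) * β) = A
    have : (((0 : Fin (n+2)) : ℕ) : ℝ) * β = 0 := by norm_num
    rw [this]
    simp [emap]
  · show emap A A' (((Fin.last (n+1) : Fin (n+2)) : ℕ) * β) = B
    have h1 : ((Fin.last (n+1) : Fin (n+2)) : ℕ) = n + 1 := rfl
    have h2 : (((n:ℕ) + 1 : ℕ) : ℝ) * β = φ + (k : ℤ) * (2 * π) := by
      rw [hβ]
      field_simp
      push_cast
      ring
    rw [h1, h2, emap_int_period, hBφ]
    rfl
  · intro i
    rw [hE i]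
    exact norm_emap hA hA' hAA' _
  · intro i h
    rw [hE i.castSucc, hE i.succ] at h
    have := cos_eq_one_of_emap_eq hA hA' hAA' h
    rw [Fin.coe_castSucc, Fin.val_succ] at this
    apply hcβ
    rw [show ((i:ℕ):ℝ) * β - ((i:ℕ) + 1 : ℕ) * β = -β by push_cast; ring, Real.cos_neg] at this
    exact this
  · intro i v hv
    rw [hE i.succ.castSucc, hE i.castSucc.castSucc, hE i.succ.succ] at *
    have h1 : ((i.succ.castSucc : Fin (n+2)) : ℕ) = (i:ℕ) + 1 := rfl
    have h2 : ((i.castSucc.castSucc : Fin (n+2)) : ℕ) = (i:ℕ) := rfl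
    have h3 : ((i.succ.succ : Fin (n+2)) : ℕ) = (i:ℕ) + 2 := rfl
    rw [h1, h2, h3]
    rw [h1] at hv
    have e2 : ((i:ℕ):ℝ) * β = (((i:ℕ) + 1 : ℕ):ℝ) * β - β := by push_cast; ring
    have e3 : (((i:ℕ) + 2 : ℕ):ℝ) * β = (((i:ℕ) + 1 : ℕ):ℝ) * β + β := by push_cast; ring
    rw [e2, e3]
    exact emap_reflect hA hA' hAA' hcβ _ v hv

end SBT

namespace SBT
variable {m : ℕ}

lemma part2_fwd {n : ℕ} (A B A' : Euc m) (hA : ‖A‖ = 1) (hB : ‖B‖ = 1)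
    (hAB : A ≠ B) (hAB' : A ≠ -B)
    (hA' : ‖A'‖ = 1) (hAA' : (inner ℝ A A' : ℝ) = 0)
    {φ : ℝ} (hφ : φ ∈ Set.Ioo 0 (2 * π))
    (hBφ : B = Real.cos φ • A + Real.sin φ • A')
    (p : Fin (n + 2) → Euc m) (hp : IsSphereBilliardTrajectory A B n p) :
    ∃ k : ℕ, k ≤ n ∧ p = fun i : Fin (n + 2) =>
      Real.cos ((i : ℕ) * ((φ + 2 * π * k) / (n + 1))) • A +
        Real.sin ((i : ℕ) * ((φ + 2 * π * k) / (n + 1))) • A' := by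
  have hspan := part1 A B hA hB hAB hAB' p hp
  obtain ⟨hp0, hpl, hnorm, hne, hrefl⟩ := hp
  have hsub : Submodule.span ℝ ({A, B} : Set (Euc m)) ≤
      Submodule.span ℝ ({A, A'} : Set (Euc m)) := by
    rw [Submodule.span_le]
    rintro v (rfl | rfl)
    · exact Submodule.subset_span (by simp)
    · rw [hBφ]
      exact add_mem (Submodule.smul_mem _ _ (Submodule.subset_span (by simp)))
        (Submodule.smul_mem _ _ (Submodule.subset_span (by simp)))
  have hmem' : ∀ i, p i ∈ Submodule.span ℝ ({A, A'} : Set (Euc m)) :=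
    fun i => hsub (hspan i)
  obtain ⟨α, hα⟩ := exists_emap hA hA' hAA' (hnorm 1) (hmem' 1)
  have hall : ∀ i : Fin (n+2), p i = emap A A' ((i : ℕ) * α) := by
    apply fin_two_step_induction (C := fun i : Fin (n+2) => p i = emap A A' ((i : ℕ) * α))
    · show p 0 = emap A A' ((((0:Fin (n+2)) : ℕ) : ℝ) * α)
      rw [hp0, show ((((0:Fin (n+2)) : ℕ)) : ℝ) * α = 0 by norm_num]
      simp [emap]
    · show p 1 = emap A A' ((((1:Fin (n+2)) : ℕ) : ℝ) * α)
      rw [hα, show ((((1:Fin (n+2)) : ℕ)) : ℝ) * α = α by norm_num]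
    · intro i h IH1 IH2
      obtain ⟨c, hc⟩ := exists_emap hA hA' hAA' (hnorm ⟨i+2, h⟩) (hmem' ⟨i+2, h⟩)
      have hne1 : p ⟨i, by omega⟩ ≠ p ⟨i+1, by omega⟩ := hne ⟨i, by omega⟩
      have hne2 : p ⟨i+1, by omega⟩ ≠ p ⟨i+2, by omega⟩ := hne ⟨i+1, by omega⟩
      have hrefl' := hrefl ⟨i, by omega⟩
      have e1 : ((⟨i, by omega⟩ : Fin n)).castSucc.castSucc = (⟨i, by omega⟩ : Fin (n+2)) := rfl
      have e2 : ((⟨i, by omega⟩ : Fin n)).succ.castSucc = (⟨i+1, by omega⟩ : Fin (n+2)) := rfl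
      have e3 : ((⟨i, by omega⟩ : Fin n)).succ.succ = (⟨i+2, by omega⟩ : Fin (n+2)) := rfl
      simp only [e1, e2, e3, IH1, IH2, hc] at hrefl'
      rw [IH1, IH2] at hne1
      rw [IH2, hc] at hne2
      have hab : Real.cos (((i:ℕ):ℝ) * α - (((i+1:ℕ)):ℝ) * α) ≠ 1 :=
        fun hh => hne1 (emap_eq_of_cos hA hA' hAA' hh)
      have hcb : Real.cos (c - (((i+1:ℕ)):ℝ) * α) ≠ 1 :=
        fun hh => (Ne.symm hne2) (emap_eq_of_cos hA hA' hAA' hh)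
      have hstep := emap_step hA hA' hAA' hab hcb hrefl'
      show p ⟨i+2, h⟩ = emap A A' ((((i+2:ℕ)):ℝ) * α)
      rw [hc, hstep, show 2 * ((((i+1:ℕ)):ℝ) * α) - ((i:ℕ):ℝ) * α = (((i+2:ℕ)):ℝ) * α by
        push_cast; ring]
  -- endpoint analysis
  have hBe : B = emap A A' φ := hBφ
  have hlast : emap A A' ((((n+1:ℕ)):ℝ) * α) = emap A A' φ := by
    have h1 := hall (Fin.last (n+1))
    rw [hpl] at h1
    exact h1.symm.trans hBe
  have hcos1 := cos_eq_one_of_emap_eq hA hA' hAA' hlast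
  obtain ⟨j, hj⟩ := (Real.cos_eq_one_iff _).mp hcos1
  set t := j / ((n:ℤ)+1) with ht
  set k := j % ((n:ℤ)+1) with hk
  have hn0 : ((n:ℤ)+1) ≠ 0 := by omega
  have hk0 : 0 ≤ k := Int.emod_nonneg j hn0
  have hkn : k < (n:ℤ)+1 := Int.emod_lt_of_pos j (by omega)
  have hjtk : ((n:ℤ)+1) * t + k = j := Int.mul_ediv_add_emod j ((n:ℤ)+1)
  refine ⟨k.toNat, by omega, ?_⟩
  funext i
  rw [hall i]
  show emap A A' (((i:ℕ):ℝ) * α) =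
    emap A A' (((i:ℕ):ℝ) * ((φ + 2 * π * (k.toNat : ℕ)) / ((n:ℕ) + 1)))
  have hkr : (((k.toNat : ℕ)) : ℝ) = ((k:ℤ) : ℝ) := by
    exact_mod_cast congrArg (Int.cast : ℤ → ℝ) (Int.toNat_of_nonneg hk0)
  have hnr : ((n:ℝ)+1) ≠ 0 := by positivity
  have hjr : ((j:ℤ):ℝ) * (2*π) = (((n+1:ℕ)):ℝ) * α - φ := hj
  have hjtkr : (((n:ℤ)+1 : ℤ):ℝ) * ((t:ℤ):ℝ) + ((k:ℤ):ℝ) = ((j:ℤ):ℝ) := by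
    exact_mod_cast congrArg (fun z : ℤ => (z : ℝ)) hjtk
  have harg : ((i:ℕ):ℝ) * α =
      ((i:ℕ):ℝ) * ((φ + 2 * π * ((k.toNat : ℕ):ℝ)) / ((n:ℕ) + 1)) + (((i:ℕ):ℤ) * t : ℤ) * (2*π) := by
    rw [hkr]
    push_cast at hjr hjtkr ⊢
    field_simp
    linear_combination (-(((i:ℕ):ℝ))) * hjr - (2*π*((i:ℕ):ℝ)) * hjtkr
  rw [harg, emap_int_period]

end SBT


open SBT

/-- Billiards in the unit sphere `S^m`: for distinct non-antipodal
`A, B ∈ S^m` and any `n ≥ 1`,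
(1) every billiard trajectory from `A` to `B` with `n` reflections lies in the `2`-plane
through `A`, `B` and the origin;
(2) choosing a unit vector `A'` in that plane orthogonal to `A` and letting
`φ ∈ (0,2π)` be the angle with `B = cos φ • A + sin φ • A'`, the trajectories are
exactly the maps `i ↦ cos(i α_k) • A + sin(i α_k) • A'` with
`α_k = (φ + 2πk)/(n+1)`, `k = 0, 1, …, n`;
(3) hence there are exactly `n+1` such trajectories. -/
theorem sphere_billiard_trajectories (m n : ℕ) (hn : 1 ≤ n) (A B : Euc m)
    (hA : ‖A‖ = 1) (hB : ‖B‖ = 1) (hAB : A ≠ B) (hAB' : A ≠ -B) :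
    (∀ p : Fin (n + 2) → Euc m, IsSphereBilliardTrajectory A B n p →
      ∀ i, p i ∈ Submodule.span ℝ ({A, B} : Set (Euc m))) ∧
    (∀ A' : Euc m, ‖A'‖ = 1 → A' ∈ Submodule.span ℝ ({A, B} : Set (Euc m)) →
      (inner ℝ A A' : ℝ) = 0 →
      ∀ φ : ℝ, φ ∈ Set.Ioo 0 (2 * π) → B = Real.cos φ • A + Real.sin φ • A' →
        ∀ p : Fin (n + 2) → Euc m,
          IsSphereBilliardTrajectory A B n p ↔
            ∃ k : ℕ, k ≤ n ∧ p = fun i : Fin (n + 2) =>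
              Real.cos ((i : ℕ) * ((φ + 2 * π * k) / (n + 1))) • A +
                Real.sin ((i : ℕ) * ((φ + 2 * π * k) / (n + 1))) • A') ∧
    Set.encard {p : Fin (n + 2) → Euc m | IsSphereBilliardTrajectory A B n p} =
      (n + 1 : ℕ∞) := by

  have hpi := Real.pi_pos
  refine ⟨fun p hp => part1 A B hA hB hAB hAB' p hp, ?_, ?_⟩
  · intro A' hA' hA'mem hAA' φ hφ hBφ p
    constructor
    · exact part2_fwd A B A' hA hB hAB hAB' hA' hAA' hφ hBφ p
    · rintro ⟨k, hk, rfl⟩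
      exact part2_back A B A' hA hA' hAA' hφ hBφ k hk
  · -- construct A' and φ
    set c : ℝ := inner ℝ A B with hc
    have hc1 : |c| ≤ 1 := by
      have := abs_real_inner_le_norm A B
      rwa [hA, hB, mul_one] at this
    have hclt : c < 1 := by
      rcases lt_or_eq_of_le (abs_le.mp hc1).2 with h | h
      · exact h
      · exact absurd ((inner_eq_one_iff_of_norm_eq_one hA hB).mp h) hAB
    have hcgt : -1 < c := by
      rcases lt_or_eq_of_le (abs_le.mp hc1).1 with h | h
      · exact h
      · exfalso
        apply hAB'
        have : (inner ℝ A (-B) : ℝ) = 1 := by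
          rw [inner_neg_right, ← hc, ← h]; ring
        exact (inner_eq_one_iff_of_norm_eq_one hA (by rw [norm_neg, hB])).mp this
    set w : Euc m := B - c • A with hw
    have hwA : (inner ℝ A w : ℝ) = 0 := by
      rw [hw, inner_sub_right, real_inner_smul_right, real_inner_self_eq_norm_sq, hA]
      simp [hc]
    have hwn : ‖w‖ ^ 2 = 1 - c ^ 2 := by
      rw [← real_inner_self_eq_norm_sq, hw]
      rw [inner_sub_sub_self]
      have hBA : (inner ℝ B A : ℝ) = c := by rw [real_inner_comm]
      rw [real_inner_self_eq_norm_sq, hB, real_inner_smul_right, real_inner_smul_left,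
        real_inner_smul_left, real_inner_smul_right, real_inner_self_eq_norm_sq, hA, hBA]
      ring
    have hwpos : 0 < ‖w‖ := by nlinarith [norm_nonneg w]
    set A' : Euc m := ‖w‖⁻¹ • w with hA'def
    have hA'n : ‖A'‖ = 1 := by
      rw [hA'def, norm_smul, norm_inv, norm_norm, inv_mul_cancel₀ (ne_of_gt hwpos)]
    have hAA' : (inner ℝ A A' : ℝ) = 0 := by
      rw [hA'def, real_inner_smul_right, hwA, mul_zero]
    set φ := Real.arccos c with hφdef
    have hφcos : Real.cos φ = c := Real.cos_arccos (le_of_lt hcgt) (le_of_lt hclt)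
    have hφsin : Real.sin φ = ‖w‖ := by
      rw [hφdef, Real.sin_arccos, ← hwn, Real.sqrt_sq (norm_nonneg w)]
    have hφmem : φ ∈ Set.Ioo 0 (2 * π) :=
      ⟨Real.arccos_pos.mpr hclt, lt_of_le_of_lt (Real.arccos_le_pi c) (by linarith)⟩
    have hBφ : B = Real.cos φ • A + Real.sin φ • A' := by
      rw [hφcos, hφsin, hA'def, smul_smul, mul_inv_cancel₀ (ne_of_gt hwpos), one_smul, hw]
      abel
    set T : ℕ → (Fin (n + 2) → Euc m) := fun k => fun i : Fin (n + 2) =>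
        Real.cos ((i : ℕ) * ((φ + 2 * π * k) / (n + 1))) • A +
          Real.sin ((i : ℕ) * ((φ + 2 * π * k) / (n + 1))) • A' with hT
    have hset : {p : Fin (n + 2) → Euc m | IsSphereBilliardTrajectory A B n p}
        = T '' (Set.Iic n) := by
      ext p
      simp only [Set.mem_setOf_eq, Set.mem_image, Set.mem_Iic]
      constructor
      · intro hp
        obtain ⟨k, hk, hpk⟩ := part2_fwd A B A' hA hB hAB hAB' hA'n hAA' hφmem hBφ p hp
        exact ⟨k, hk, hpk.symm⟩
      · rintro ⟨k, hk, rfl⟩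
        exact part2_back A B A' hA hA'n hAA' hφmem hBφ k hk
    have hbnd : ∀ k : ℕ, k ≤ n →
        0 < (φ + 2 * π * k) / ((n:ℝ) + 1) ∧ (φ + 2 * π * k) / ((n:ℝ) + 1) < 2 * π := by
      intro k hk
      have hn1 : (0:ℝ) < (n:ℝ) + 1 := by positivity
      have hk' : (k:ℝ) ≤ n := by exact_mod_cast hk
      obtain ⟨h1, h2⟩ := hφmem
      constructor
      · apply div_pos _ hn1
        have : (0:ℝ) ≤ 2 * π * k := by positivity
        linarith
      · rw [div_lt_iff₀ hn1]
        nlinarith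
    have hinj : Set.InjOn T (Set.Iic n) := by
      intro k hk k' hk' hkk
      rw [Set.mem_Iic] at hk hk'
      have h1 := congrFun hkk (1 : Fin (n + 2))
      have h1' : emap A A' ((((1 : Fin (n+2)) : ℕ)) * ((φ + 2 * π * k) / (n + 1)))
          = emap A A' ((((1 : Fin (n+2)) : ℕ)) * ((φ + 2 * π * k') / (n + 1))) := h1
      have hco := cos_eq_one_of_emap_eq hA hA'n hAA' h1'
      have hv1 : (((1 : Fin (n+2)) : ℕ) : ℝ) = 1 := by norm_num
      rw [hv1, one_mul, one_mul] at hco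
      obtain ⟨hb1, hb2⟩ := hbnd k hk
      obtain ⟨hb1', hb2'⟩ := hbnd k' hk'
      have hdiff := (Real.cos_eq_one_iff_of_lt_of_lt (by linarith) (by linarith)).mp hco
      have h3 : (φ + 2 * π * k) / ((n:ℝ) + 1) = (φ + 2 * π * k') / ((n:ℝ) + 1) :=
        sub_eq_zero.mp hdiff
      have hn1 : ((n:ℝ) + 1) ≠ 0 := by positivity
      field_simp at h3
      exact_mod_cast (mul_left_cancel₀ (by positivity : (2*π:ℝ) ≠ 0) (add_left_cancel h3))
    rw [hset, hinj.encard_image, show (Set.Iic n : Set ℕ) = ↑(Finset.Iic n) by simp,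
      Set.encard_coe_eq_coe_finsetCard, Nat.card_Iic]
    push_cast
    rfl


end
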